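/- arXiv:1703.10145 — 2 statements merged into one kernel-verified Lean document; each statement's English description precedes it below -/
import Mathlib

section
/- Let (M̄, ḡ) be a Lorentzian manifold, M a null hypersurface of M̄, and ζ a rigging vector field for M (a vector field on a neighborhood of M with ζ_p ∉ T_pM for all p ∈ M). Define α = ḡ(ζ, ·), ω = i*α for the inclusion i : M → M̄, and g̃ = i*(ḡ + α ⊗ α). Then g̃ is a Riemannian (positive definite) metric on M. -/
/- STATEMENT 5: For a null hypersurface M of a Lorentzian manifold with a
rigging ζ, the tensor g̃ = i*(ḡ + α⊗α), α = ḡ(ζ,·), is a Riemannian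
(symmetric positive definite) metric on M. -/

open Manifold
noncomputable section

/-- A Lorentzian metric of signature (−,+,…,+): a symmetric bilinear form on
each tangent space possessing a timelike vector whose orthogonal complement is
positive definite. -/
structure LorentzMetric (E : Type*) [NormedAddCommGroup E] [NormedSpace ℝ E]
    (X : Type*) [TopologicalSpace X] [ChartedSpace E X] where
  g : ∀ x : X, TangentSpace (𝓘(ℝ, E)) x → TangentSpace (𝓘(ℝ, E)) x → ℝ
  symm : ∀ x u v, g x u v = g x v u
  add_left : ∀ x u u' v, g x (u + u') v = g x u v + g x u' v
  smul_left : ∀ x (a : ℝ) u v, g x (a • u) v = a * g x u v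
  lorentz : ∀ x, ∃ v, g x v v < 0 ∧ ∀ w, g x v w = 0 → w ≠ 0 → 0 < g x w w

variable {n : ℕ}
  {Mb : Type*} [TopologicalSpace Mb]
  [ChartedSpace (EuclideanSpace ℝ (Fin (n+2))) Mb]
  [IsManifold (𝓘(ℝ, EuclideanSpace ℝ (Fin (n+2)))) (⊤ : ℕ∞) Mb]
  {M : Type*} [TopologicalSpace M]
  [ChartedSpace (EuclideanSpace ℝ (Fin (n+1))) M]
  [IsManifold (𝓘(ℝ, EuclideanSpace ℝ (Fin (n+1)))) (⊤ : ℕ∞) M]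

/-- The differential of the inclusion `i : M → M̄` at `p`. -/
def dI (n : ℕ)
    {Mb : Type*} [TopologicalSpace Mb]
    [ChartedSpace (EuclideanSpace ℝ (Fin (n+2))) Mb]
    [IsManifold (𝓘(ℝ, EuclideanSpace ℝ (Fin (n+2)))) (⊤ : ℕ∞) Mb]
    {M : Type*} [TopologicalSpace M]
    [ChartedSpace (EuclideanSpace ℝ (Fin (n+1))) M]
    [IsManifold (𝓘(ℝ, EuclideanSpace ℝ (Fin (n+1)))) (⊤ : ℕ∞) M]
    (i : M → Mb) (p : M) :
    TangentSpace (𝓘(ℝ, EuclideanSpace ℝ (Fin (n+1)))) p →L[ℝ]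
      TangentSpace (𝓘(ℝ, EuclideanSpace ℝ (Fin (n+2)))) (i p) :=
  mfderiv (𝓘(ℝ, EuclideanSpace ℝ (Fin (n+1))))
    (𝓘(ℝ, EuclideanSpace ℝ (Fin (n+2)))) i p

/-- `i : M → M̄` is a (smooth immersed) hypersurface inclusion. -/
def IsHypersurfaceIncl (n : ℕ)
    {Mb : Type*} [TopologicalSpace Mb]
    [ChartedSpace (EuclideanSpace ℝ (Fin (n+2))) Mb]
    [IsManifold (𝓘(ℝ, EuclideanSpace ℝ (Fin (n+2)))) (⊤ : ℕ∞) Mb]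
    {M : Type*} [TopologicalSpace M]
    [ChartedSpace (EuclideanSpace ℝ (Fin (n+1))) M]
    [IsManifold (𝓘(ℝ, EuclideanSpace ℝ (Fin (n+1)))) (⊤ : ℕ∞) M]
    (i : M → Mb) : Prop :=
  ContMDiff (𝓘(ℝ, EuclideanSpace ℝ (Fin (n+1))))
      (𝓘(ℝ, EuclideanSpace ℝ (Fin (n+2)))) (⊤ : ℕ∞) i ∧
    Function.Injective i ∧ ∀ p : M, Function.Injective (dI n i p)

/-- `M` is a *null* hypersurface: at every point the induced metric on the
tangent space is degenerate. -/
def IsNullHypersurface (n : ℕ)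
    {Mb : Type*} [TopologicalSpace Mb]
    [ChartedSpace (EuclideanSpace ℝ (Fin (n+2))) Mb]
    [IsManifold (𝓘(ℝ, EuclideanSpace ℝ (Fin (n+2)))) (⊤ : ℕ∞) Mb]
    {M : Type*} [TopologicalSpace M]
    [ChartedSpace (EuclideanSpace ℝ (Fin (n+1))) M]
    [IsManifold (𝓘(ℝ, EuclideanSpace ℝ (Fin (n+1)))) (⊤ : ℕ∞) M]
    (gb : LorentzMetric (EuclideanSpace ℝ (Fin (n+2))) Mb)
    (i : M → Mb) : Prop :=
  ∀ p : M, ∃ u : TangentSpace (𝓘(ℝ, EuclideanSpace ℝ (Fin (n+1)))) p,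
    u ≠ 0 ∧ ∀ v, gb.g (i p) (dI n i p u) (dI n i p v) = 0

/-- A vector field `ζ` on the ambient manifold is a *rigging* for `M`:
it is everywhere transverse to `M`. -/
def IsRigging (n : ℕ)
    {Mb : Type*} [TopologicalSpace Mb]
    [ChartedSpace (EuclideanSpace ℝ (Fin (n+2))) Mb]
    [IsManifold (𝓘(ℝ, EuclideanSpace ℝ (Fin (n+2)))) (⊤ : ℕ∞) Mb]
    {M : Type*} [TopologicalSpace M]
    [ChartedSpace (EuclideanSpace ℝ (Fin (n+1))) M]
    [IsManifold (𝓘(ℝ, EuclideanSpace ℝ (Fin (n+1)))) (⊤ : ℕ∞) M]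
    (i : M → Mb)
    (ζ : ∀ x : Mb, TangentSpace (𝓘(ℝ, EuclideanSpace ℝ (Fin (n+2)))) x) : Prop :=
  ∀ p : M, ζ (i p) ∉ Set.range (dI n i p)

/-- The rigged tensor `g̃ = i*(ḡ + α ⊗ α)`, `α = ḡ(ζ,·)`. -/
def riggedMetric (n : ℕ)
    {Mb : Type*} [TopologicalSpace Mb]
    [ChartedSpace (EuclideanSpace ℝ (Fin (n+2))) Mb]
    [IsManifold (𝓘(ℝ, EuclideanSpace ℝ (Fin (n+2)))) (⊤ : ℕ∞) Mb]
    {M : Type*} [TopologicalSpace M]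
    [ChartedSpace (EuclideanSpace ℝ (Fin (n+1))) M]
    [IsManifold (𝓘(ℝ, EuclideanSpace ℝ (Fin (n+1)))) (⊤ : ℕ∞) M]
    (gb : LorentzMetric (EuclideanSpace ℝ (Fin (n+2))) Mb)
    (i : M → Mb)
    (ζ : ∀ x : Mb, TangentSpace (𝓘(ℝ, EuclideanSpace ℝ (Fin (n+2)))) x)
    (p : M) (u v : TangentSpace (𝓘(ℝ, EuclideanSpace ℝ (Fin (n+1)))) p) : ℝ :=
  gb.g (i p) (dI n i p u) (dI n i p v) +
    gb.g (i p) (ζ (i p)) (dI n i p u) * gb.g (i p) (ζ (i p)) (dI n i p v)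

/-! On the null hyperplane `T_pM` the ambient metric is positive semidefinite with radical the
null line `ℝ N`: every tangent vector is `y + a N` with `y` orthogonal to a timelike vector, where
`ḡ` is positive definite. So `g̃(x, x) = ḡ(x, x) + α(x)²` can vanish only on `ℝ N`, and there
`α(N) = ḡ(ζ, N) ≠ 0`, since `N^⊥` is the hyperplane `T_pM` and `ζ` is transverse to it. -/

lemma Module.Dual.eq_ker_of_le_ker {K V : Type*} [Field K] [AddCommGroup V] [Module K V]
    [FiniteDimensional K V] {f : Module.Dual K V} (hf : f ≠ 0) {W : Submodule K V}
    (hW : W ≤ LinearMap.ker f) (hrank : Module.finrank K W + 1 = Module.finrank K V) :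
    W = LinearMap.ker f :=
  Submodule.eq_of_le_of_finrank_eq hW (by have := f.finrank_ker_add_one_of_ne_zero hf; omega)

section NullHyperplane

variable {V : Type*} [AddCommGroup V] [Module ℝ V] {B : LinearMap.BilinForm ℝ V}
  {v n₀ x z : V}

lemma apply_ne_zero_of_isotropic (hpos : ∀ w, B v w = 0 → w ≠ 0 → 0 < B w w)
    (hn₀ : n₀ ≠ 0) (hiso : B n₀ n₀ = 0) : B v n₀ ≠ 0 :=
  fun h => (hpos n₀ h hn₀).ne' hiso

lemma pos_or_eq_smul_of_orthogonal_isotropic (hB : B.IsSymm)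
    (hpos : ∀ w, B v w = 0 → w ≠ 0 → 0 < B w w) (hvn₀ : B v n₀ ≠ 0) (hiso : B n₀ n₀ = 0)
    (hx : B n₀ x = 0) : 0 < B x x ∨ ∃ a : ℝ, x = a • n₀ := by
  set a := B v x / B v n₀
  have hy : B v (x - a • n₀) = 0 := by
    simp only [map_sub, map_smul, smul_eq_mul, a]
    field_simp
    ring
  have hyy : B (x - a • n₀) (x - a • n₀) = B x x := by
    simp only [map_sub, map_smul, LinearMap.sub_apply, LinearMap.smul_apply, smul_eq_mul,
      hB.eq x n₀, hx, hiso]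
    ring
  by_cases hy0 : x - a • n₀ = 0
  · exact Or.inr ⟨a, sub_eq_zero.mp hy0⟩
  · exact Or.inl (hyy ▸ hpos _ hy hy0)

lemma pos_add_mul_self_of_mem_null_hyperplane [FiniteDimensional ℝ V] (hB : B.IsSymm)
    (hpos : ∀ w, B v w = 0 → w ≠ 0 → 0 < B w w) {W : Submodule ℝ V}
    (hrank : Module.finrank ℝ W + 1 = Module.finrank ℝ V) (hn₀W : n₀ ∈ W) (hn₀ : n₀ ≠ 0)
    (hrad : ∀ w ∈ W, B n₀ w = 0) (hz : z ∉ W) (hxW : x ∈ W) (hx : x ≠ 0) :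
    0 < B x x + B z x * B z x := by
  have hiso : B n₀ n₀ = 0 := hrad n₀ hn₀W
  have hvn₀ : B v n₀ ≠ 0 := apply_ne_zero_of_isotropic hpos hn₀ hiso
  rcases pos_or_eq_smul_of_orthogonal_isotropic hB hpos hvn₀ hiso (hrad x hxW) with hxx | ⟨a, rfl⟩
  · exact add_pos_of_pos_of_nonneg hxx (mul_self_nonneg _)
  · have ha : a ≠ 0 := by rintro rfl; simp at hx
    have hBn₀ : B n₀ ≠ 0 := fun h => hvn₀ (by rw [hB.eq, h, LinearMap.zero_apply])
    have hzn₀ : B n₀ z ≠ 0 := fun h => hz <|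
      (Module.Dual.eq_ker_of_le_ker hBn₀ hrad hrank).symm ▸ h
    simp only [map_smul, LinearMap.smul_apply, smul_eq_mul, hiso, mul_zero, zero_add, hB.eq z n₀]
    exact mul_self_pos.mpr (mul_ne_zero ha hzn₀)

end NullHyperplane

namespace LorentzMetric

variable {E : Type*} [NormedAddCommGroup E] [NormedSpace ℝ E]
  {X : Type*} [TopologicalSpace X] [ChartedSpace E X]

def bilinForm (gb : LorentzMetric E X) (x : X) : LinearMap.BilinForm ℝ E :=
  LinearMap.mk₂ ℝ (gb.g x) (gb.add_left x) (gb.smul_left x)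
    (fun u v w => by
      have := gb.add_left x v w u
      rw [gb.symm x v u, gb.symm x w u] at this
      exact (gb.symm x u _).trans this)
    (fun a u v => by
      have := gb.smul_left x a v u
      rw [gb.symm x v u] at this
      exact (gb.symm x u _).trans this)

lemma bilinForm_isSymm (gb : LorentzMetric E X) (x : X) : (gb.bilinForm x).IsSymm :=
  ⟨gb.symm x⟩

end LorentzMetric

lemma finrank_range_dI_add_one {i : M → Mb} {p : M} (hinj : Function.Injective (dI n i p)) :
    Module.finrank ℝ (LinearMap.range (dI n i p).toLinearMap :
      Submodule ℝ (EuclideanSpace ℝ (Fin (n+2)))) + 1 =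
      Module.finrank ℝ (EuclideanSpace ℝ (Fin (n+2))) := by
  show Module.finrank ℝ (LinearMap.range (dI n i p).toLinearMap) + 1 = _
  rw [LinearMap.finrank_range_of_inj hinj]
  show Module.finrank ℝ (EuclideanSpace ℝ (Fin (n+1))) + 1 = _
  simp only [finrank_euclideanSpace_fin]

theorem riggedMetric_isRiemannian
    (gb : LorentzMetric (EuclideanSpace ℝ (Fin (n+2))) Mb)
    (i : M → Mb) (hi : IsHypersurfaceIncl n i)
    (hnull : IsNullHypersurface n gb i)
    (ζ : ∀ x : Mb, TangentSpace (𝓘(ℝ, EuclideanSpace ℝ (Fin (n+2)))) x)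
    (hζ : IsRigging n i ζ) :
    (∀ (p : M) (u v), riggedMetric n gb i ζ p u v = riggedMetric n gb i ζ p v u) ∧
    (∀ (p : M) (u), u ≠ 0 → 0 < riggedMetric n gb i ζ p u u) := by
  refine ⟨fun p u v => ?_, fun p u hu => ?_⟩
  · simp only [riggedMetric]
    rw [gb.symm _ (dI n i p u)]
    ring
  · have hinj := hi.2.2 p
    obtain ⟨v, -, hpos⟩ := gb.lorentz (i p)
    obtain ⟨u₀, hu₀, hrad⟩ := hnull p
    exact pos_add_mul_self_of_mem_null_hyperplane (gb.bilinForm_isSymm (i p)) hpos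
      (finrank_range_dI_add_one hinj) (LinearMap.mem_range_self _ u₀)
      ((map_ne_zero_iff _ hinj).2 hu₀) (by rintro _ ⟨w, rfl⟩; exact hrad w)
      (fun ⟨w, hw⟩ => hζ p ⟨w, hw⟩) (LinearMap.mem_range_self _ u) ((map_ne_zero_iff _ hinj).2 hu)
end
end

section
/- Let (M̄, ḡ) be a Lorentzian manifold carrying a closed timelike vector field. Then every compact null hypersurface M ⊆ M̄ has nontrivial first De Rham cohomology H¹(M, ℝ); in particular M is not simply connected. -/
/- STATEMENT 10: If a Lorentzian manifold carries a closed timelike vector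
field, then every compact null hypersurface M has nontrivial H¹(M,ℝ); in
particular M is not simply connected. -/

open Manifold
noncomputable section

variable {n : ℕ}
  {Mb : Type*} [TopologicalSpace Mb]
  [ChartedSpace (EuclideanSpace ℝ (Fin (n+2))) Mb]
  [IsManifold (𝓘(ℝ, EuclideanSpace ℝ (Fin (n+2)))) (⊤ : ℕ∞) Mb]
  {M : Type*} [TopologicalSpace M]
  [ChartedSpace (EuclideanSpace ℝ (Fin (n+1))) M]
  [IsManifold (𝓘(ℝ, EuclideanSpace ℝ (Fin (n+1)))) (⊤ : ℕ∞) M]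

/-- The 1-form `α = ḡ(ζ,·)` is closed, i.e. locally exact. -/
def IsClosedRigging (n : ℕ)
    {Mb : Type*} [TopologicalSpace Mb]
    [ChartedSpace (EuclideanSpace ℝ (Fin (n+2))) Mb]
    [IsManifold (𝓘(ℝ, EuclideanSpace ℝ (Fin (n+2)))) (⊤ : ℕ∞) Mb]
    (gb : LorentzMetric (EuclideanSpace ℝ (Fin (n+2))) Mb)
    (ζ : ∀ x : Mb, TangentSpace (𝓘(ℝ, EuclideanSpace ℝ (Fin (n+2)))) x) : Prop :=
  ∀ x : Mb, ∃ U : Set Mb, IsOpen U ∧ x ∈ U ∧ ∃ f : Mb → ℝ,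
    ∀ y ∈ U, ∀ v, gb.g y (ζ y) v
      = mfderiv (𝓘(ℝ, EuclideanSpace ℝ (Fin (n+2)))) (𝓘(ℝ)) f y v

/-- A closed 1-form on `M` (local exactness characterization). -/
def IsClosedOneForm (n : ℕ)
    {M : Type*} [TopologicalSpace M]
    [ChartedSpace (EuclideanSpace ℝ (Fin (n+1))) M]
    [IsManifold (𝓘(ℝ, EuclideanSpace ℝ (Fin (n+1)))) (⊤ : ℕ∞) M]
    (ω : ∀ p : M, TangentSpace (𝓘(ℝ, EuclideanSpace ℝ (Fin (n+1)))) p → ℝ) : Prop :=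
  ∀ p : M, ∃ U : Set M, IsOpen U ∧ p ∈ U ∧ ∃ f : M → ℝ,
    ∀ q ∈ U, ∀ v, ω q v = mfderiv (𝓘(ℝ, EuclideanSpace ℝ (Fin (n+1)))) (𝓘(ℝ)) f q v

/-- An exact 1-form on `M`. -/
def IsExactOneForm (n : ℕ)
    {M : Type*} [TopologicalSpace M]
    [ChartedSpace (EuclideanSpace ℝ (Fin (n+1))) M]
    [IsManifold (𝓘(ℝ, EuclideanSpace ℝ (Fin (n+1)))) (⊤ : ℕ∞) M]
    (ω : ∀ p : M, TangentSpace (𝓘(ℝ, EuclideanSpace ℝ (Fin (n+1)))) p → ℝ) : Prop :=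
  ∃ f : M → ℝ, MDifferentiable (𝓘(ℝ, EuclideanSpace ℝ (Fin (n+1)))) (𝓘(ℝ)) f ∧
    ∀ (q : M) (v), ω q v = mfderiv (𝓘(ℝ, EuclideanSpace ℝ (Fin (n+1)))) (𝓘(ℝ)) f q v

/-! The pullback `ω = i*α` of `α = ḡ(ζ, ·)` is closed, and it vanishes nowhere on `M`: a null
tangent vector `u` of `M` is `ḡ`-orthogonal to all of `TM`, and if also `α(u) = 0` it would be a
null vector orthogonal to the timelike `ζ`, hence zero. On a compact manifold every exact form
vanishes at a maximum of its potential, so `ω` is not exact. If `M` were simply connected, the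
étalé space of local primitives of `ω` would be a covering of `M` with a section, i.e. `ω` would
have a global primitive. -/

open Filter Topology

theorem LinearMap.BilinForm.eq_zero_of_null_of_orthogonal_timelike {V : Type*}
    [AddCommGroup V] [Module ℝ V] {B : LinearMap.BilinForm ℝ V} (hB : B.IsSymm) {v : V}
    (hpos : ∀ w, B v w = 0 → w ≠ 0 → 0 < B w w) {z w : V} (hz : B z z < 0) (hw : B w w = 0)
    (hzw : B z w = 0) : w = 0 := by
  have hvz : B v z ≠ 0 := fun h => by
    have hz0 : z ≠ 0 := by rintro rfl; simp at hz
    exact (hpos z h hz0).not_gt hz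
  -- `w - t • z` lies in `v⊥`, where `B` is positive definite, yet its square is `t ^ 2 * B z z`
  set t := B v w / B v z
  have hu : B v (w - t • z) = 0 := by
    simp only [map_sub, map_smul, smul_eq_mul, t]
    field_simp
    ring
  have huu : B (w - t • z) (w - t • z) = t ^ 2 * B z z := by
    simp only [map_sub, map_smul, LinearMap.sub_apply, LinearMap.smul_apply, smul_eq_mul, hw,
      hzw, hB.eq w z]
    ring
  have hwz : w = t • z := by
    by_contra h
    have := hpos _ hu (sub_ne_zero.2 h)
    nlinarith [sq_nonneg t]
  have ht : t = 0 := by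
    rw [hwz] at hw
    simpa [hz.ne] using hw
  rw [hwz, ht, zero_smul]

namespace LorentzMetric

variable {E : Type*} [NormedAddCommGroup E] [NormedSpace ℝ E]
  {X : Type*} [TopologicalSpace X] [ChartedSpace E X]

def toBilinForm (gb : LorentzMetric E X) (x : X) :
    LinearMap.BilinForm ℝ (TangentSpace 𝓘(ℝ, E) x) :=
  LinearMap.mk₂ ℝ (gb.g x) (gb.add_left x) (gb.smul_left x)
    (fun u v v' => by rw [gb.symm, gb.add_left, gb.symm x v, gb.symm x v'])
    (fun a u v => by rw [gb.symm, gb.smul_left, gb.symm, smul_eq_mul])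

lemma isSymm_toBilinForm (gb : LorentzMetric E X) (x : X) : (gb.toBilinForm x).IsSymm :=
  ⟨gb.symm x⟩

lemma eq_zero_of_null_of_orthogonal_timelike (gb : LorentzMetric E X) {x : X}
    {z w : TangentSpace 𝓘(ℝ, E) x} (hz : gb.g x z z < 0) (hw : gb.g x w w = 0)
    (hzw : gb.g x z w = 0) : w = 0 :=
  have ⟨_, _, hpos⟩ := gb.lorentz x
  LinearMap.BilinForm.eq_zero_of_null_of_orthogonal_timelike (gb.isSymm_toBilinForm x) hpos hz hw
    hzw

end LorentzMetric

/-- An abstract sheaf of local primitives of a closed 1-form: they exist near every point and are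
locally unique up to additive constants. -/
structure LocalPrimitives (X : Type*) [TopologicalSpace X] where
  IsPrimitiveAt : X → (X → ℝ) → Prop
  exists_isPrimitiveAt (x : X) : ∃ f, IsPrimitiveAt x f
  eventually_isPrimitiveAt {x : X} {f : X → ℝ} :
    IsPrimitiveAt x f → ∀ᶠ y in 𝓝 x, IsPrimitiveAt y f
  eventually_sub_eq {x : X} {f g : X → ℝ} : IsPrimitiveAt x f → IsPrimitiveAt x g →
    ∀ᶠ y in 𝓝 x, f y - g y = f x - g x
  isPrimitiveAt_of_eventually_eq_add {x : X} {f g : X → ℝ} (c : ℝ) : IsPrimitiveAt x f →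
    (∀ᶠ y in 𝓝 x, g y = f y + c) → IsPrimitiveAt x g

namespace LocalPrimitives

variable {X : Type*} [TopologicalSpace X] {P : LocalPrimitives X}

/-- A germ of a primitive at `x` is determined by its value at `x`, so the étalé space of the
sheaf of primitives is `X × ℝ`, topologized so that the graphs of primitives are open. -/
@[ext]
structure Germ (P : LocalPrimitives X) where
  base : X
  value : ℝ

namespace Germ

def sheet (g : P.Germ) (f : X → ℝ) (y : X) : P.Germ := ⟨y, g.value + (f y - f g.base)⟩

@[simp] lemma sheet_base (g : P.Germ) (f : X → ℝ) : g.sheet f g.base = g := by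
  simp [sheet]

lemma sheet_sheet (g : P.Germ) (f : X → ℝ) (y : X) : (g.sheet f y).sheet f = g.sheet f := by
  ext z <;> simp only [sheet]; ring

lemma map_sheet_eq {g : P.Germ} {f f' : X → ℝ} (hf : P.IsPrimitiveAt g.base f)
    (hf' : P.IsPrimitiveAt g.base f') :
    map (g.sheet f) (𝓝 g.base) = map (g.sheet f') (𝓝 g.base) :=
  map_congr <| (P.eventually_sub_eq hf hf').mono fun y hy => by
    ext <;> simp only [sheet]; linarith

noncomputable instance : TopologicalSpace P.Germ :=
  .mkOfNhds fun g => map (g.sheet (P.exists_isPrimitiveAt g.base).choose) (𝓝 g.base)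

lemma nhds_eq {g : P.Germ} {f : X → ℝ} (hf : P.IsPrimitiveAt g.base f) :
    𝓝 g = map (g.sheet f) (𝓝 g.base) := by
  have hchoose := fun g : P.Germ => (P.exists_isPrimitiveAt g.base).choose_spec
  rw [TopologicalSpace.nhds_mkOfNhds, map_sheet_eq (hchoose g) hf]
  · intro g
    simpa using map_mono (m := g.sheet _) (pure_le_nhds g.base)
  · intro g s hs
    rw [eventually_map]
    filter_upwards [P.eventually_isPrimitiveAt (hchoose g), eventually_eventually_nhds.2 hs]
      with y hy hys
    rw [map_sheet_eq (hchoose _) hy, sheet_sheet]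
    exact hys

lemma tendsto_sheet {g : P.Germ} {f : X → ℝ} (hf : P.IsPrimitiveAt g.base f) :
    Tendsto (g.sheet f) (𝓝 g.base) (𝓝 g) :=
  nhds_eq hf ▸ tendsto_map

lemma eventually_value_sub {g : P.Germ} {f : X → ℝ} (hf : P.IsPrimitiveAt g.base f) :
    ∀ᶠ h in 𝓝 g, h.value - f h.base = g.value - f g.base := by
  rw [nhds_eq hf, eventually_map]
  exact Eventually.of_forall fun y => by simp only [sheet]; ring

lemma continuous_base : Continuous (base : P.Germ → X) :=
  continuous_iff_continuousAt.2 fun g => by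
    rw [ContinuousAt, nhds_eq (P.exists_isPrimitiveAt g.base).choose_spec, tendsto_map'_iff]
    exact tendsto_id

end Germ

noncomputable def trivialization {U : Set X} {f : X → ℝ}
    (hf : ∀ x ∈ U, P.IsPrimitiveAt x f) :
    (Germ.base ⁻¹' U : Set P.Germ) ≃ₜ U × WithDiscreteTopology ℝ where
  toFun g := (⟨g.1.base, g.2⟩, .toTopology ⊥ (g.1.value - f g.1.base))
  invFun p := ⟨⟨p.1, p.2.ofTopology + f p.1⟩, p.1.2⟩
  left_inv g := by ext <;> simp
  right_inv p := by ext <;> simp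
  continuous_toFun := by
    refine .prodMk ((Germ.continuous_base.comp continuous_subtype_val).subtype_mk _) ?_
    simp_rw [continuous_iff_continuousAt, ContinuousAt, nhds_discrete, tendsto_pure,
      nhds_subtype, eventually_comap]
    rintro ⟨g, hg⟩
    filter_upwards [Germ.eventually_value_sub (hf _ hg)] with h hh _ rfl
    rw [hh]
  continuous_invFun := by
    simp_rw [continuous_iff_continuousAt, continuousAt_prod_of_discrete_right]
    rintro ⟨⟨x, hx⟩, c⟩
    refine IsInducing.subtypeVal.continuousAt_iff.2 ?_
    have hsheet : (fun y : U => (⟨y, c.ofTopology + f y⟩ : P.Germ))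
        = (⟨x, c.ofTopology + f x⟩ : P.Germ).sheet f ∘ Subtype.val := by
      ext y <;> simp [Germ.sheet]
    change ContinuousAt (fun y : U => (⟨y, c.ofTopology + f y⟩ : P.Germ)) ⟨x, hx⟩
    rw [hsheet]
    have := (Germ.tendsto_sheet (g := ⟨x, c.ofTopology + f x⟩) (hf x hx)).comp
      (continuous_subtype_val.continuousAt (x := (⟨x, hx⟩ : U)))
    rwa [ContinuousAt, Function.comp_apply, Germ.sheet_base]

lemma isCoveringMap_base : IsCoveringMap (Germ.base : P.Germ → X) := fun x => by
  obtain ⟨f, hf⟩ := P.exists_isPrimitiveAt x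
  obtain ⟨U, hUf, hU, hxU⟩ := eventually_nhds_iff.1 (P.eventually_isPrimitiveAt hf)
  exact .to_isEvenlyCovered_preimage (I := WithDiscreteTopology ℝ) ⟨inferInstance, U, hxU, hU,
    hU.preimage Germ.continuous_base, trivialization hUf, fun _ => rfl⟩

theorem exists_forall_isPrimitiveAt [SimplyConnectedSpace X] [LocallyPathConnectedSpace X] :
    ∃ F : X → ℝ, ∀ x, P.IsPrimitiveAt x F := by
  obtain ⟨x₀⟩ := (inferInstance : Nonempty X)
  obtain ⟨s, -, hs⟩ := (isCoveringMap_base (P := P)).existsUnique_continuousMap_lifts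
    (ContinuousMap.id X) x₀ ⟨x₀, 0⟩ rfl |>.exists
  have hbase (x : X) : (s x).base = x := congrFun hs x
  refine ⟨fun x => (s x).value, fun x => ?_⟩
  obtain ⟨f, hf⟩ := P.exists_isPrimitiveAt x
  refine P.isPrimitiveAt_of_eventually_eq_add ((s x).value - f x) hf ?_
  have := s.continuous.continuousAt.eventually (Germ.eventually_value_sub (hbase x ▸ hf))
  filter_upwards [this] with y hy
  rw [hbase, hbase] at hy
  linarith

end LocalPrimitives

section Calculus

variable {E : Type*} [NormedAddCommGroup E] [NormedSpace ℝ E]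
  {F : Type*} [NormedAddCommGroup F] [NormedSpace ℝ F]
  {X : Type*} [TopologicalSpace X] [ChartedSpace E X]

lemma mdifferentiableAt_of_mfderiv_ne_zero {f : X → F} {x : X}
    (h : mfderiv 𝓘(ℝ, E) 𝓘(ℝ, F) f x ≠ 0) :
    MDifferentiableAt 𝓘(ℝ, E) 𝓘(ℝ, F) f x := by
  by_contra hf
  exact h (mfderiv_zero_of_not_mdifferentiableAt hf)

lemma tendsto_extChartAt_symm (x : X) :
    Tendsto (extChartAt 𝓘(ℝ, E) x).symm (𝓝 (extChartAt 𝓘(ℝ, E) x x)) (𝓝 x) := by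
  simpa using (continuousAt_extChartAt_symm (I := 𝓘(ℝ, E)) x).tendsto

lemma IsLocalMax.mfderiv_eq_zero {f : X → ℝ} {x : X} (hmax : IsLocalMax f x) :
    mfderiv 𝓘(ℝ, E) 𝓘(ℝ) f x = 0 := by
  by_cases hf : MDifferentiableAt 𝓘(ℝ, E) 𝓘(ℝ) f x
  · set e := extChartAt 𝓘(ℝ, E) x
    have hmax' : IsLocalMax (f ∘ e.symm) (e x) := by
      simpa [IsLocalMax, IsMaxFilter, e, extChartAt_to_inv] using
        (tendsto_extChartAt_symm x).eventually hmax
    rw [hf.mfderiv, ModelWithCorners.range_eq_univ, fderivWithin_univ]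
    exact hmax'.fderiv_eq_zero
  · exact mfderiv_zero_of_not_mdifferentiableAt hf

lemma eventually_eq_of_fderiv_eq_zero {ψ : E → F} {a : E}
    (h : ∀ᶠ z in 𝓝 a, DifferentiableAt ℝ ψ z ∧ fderiv ℝ ψ z = 0) :
    ∀ᶠ z in 𝓝 a, ψ z = ψ a := by
  obtain ⟨s, hs, hso, has⟩ := eventually_nhds_iff.1 h
  have := hso.isOpen_inter_preimage_of_fderiv_eq_zero
    (fun z hz => (hs z hz).1.differentiableWithinAt) (fun z hz => (hs z hz).2) {ψ a}
  exact mem_of_superset (this.mem_nhds ⟨has, rfl⟩) fun z hz => hz.2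

variable [IsManifold 𝓘(ℝ, E) 1 X]

lemma eventually_eq_of_mfderiv_eq_zero {φ : X → F} {x : X}
    (h : ∀ᶠ y in 𝓝 x, MDifferentiableAt 𝓘(ℝ, E) 𝓘(ℝ, F) φ y ∧
      mfderiv 𝓘(ℝ, E) 𝓘(ℝ, F) φ y = 0) :
    ∀ᶠ y in 𝓝 x, φ y = φ x := by
  set e := extChartAt 𝓘(ℝ, E) x
  have hchart : ∀ᶠ z in 𝓝 (e x), φ (e.symm z) = φ (e.symm (e x)) := by
    refine eventually_eq_of_fderiv_eq_zero (ψ := φ ∘ e.symm) ?_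
    filter_upwards [(tendsto_extChartAt_symm x).eventually h,
      extChartAt_target_mem_nhds (I := 𝓘(ℝ, E)) x] with z ⟨hφ, hφ0⟩ hz
    have he : MDifferentiableAt 𝓘(ℝ, E) 𝓘(ℝ, E) e.symm z :=
      (mdifferentiableOn_extChartAt_symm (I := 𝓘(ℝ, E)) (x := x) z hz).mdifferentiableAt
        ((isOpen_extChartAt_target (I := 𝓘(ℝ, E)) x).mem_nhds hz)
    refine ⟨mdifferentiableAt_iff_differentiableAt.1 (hφ.comp z he), ?_⟩
    rw [← mfderiv_eq_fderiv, mfderiv_comp z hφ he, hφ0]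
    rfl
  filter_upwards [(continuousAt_extChartAt x).eventually hchart,
    extChartAt_source_mem_nhds (I := 𝓘(ℝ, E)) x] with y hy hy'
  change φ (e.symm (e y)) = φ (e.symm (e x)) at hy
  rwa [e.left_inv hy', extChartAt_to_inv] at hy

def IsPrimitiveNear (ω : ∀ x : X, TangentSpace 𝓘(ℝ, E) x → ℝ) (x : X) (f : X → ℝ) :
    Prop :=
  ∀ᶠ y in 𝓝 x, MDifferentiableAt 𝓘(ℝ, E) 𝓘(ℝ) f y ∧
    ∀ v, ω y v = mfderiv 𝓘(ℝ, E) 𝓘(ℝ) f y v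

def LocalPrimitives.ofOneForm (ω : ∀ x : X, TangentSpace 𝓘(ℝ, E) x → ℝ)
    (hω : ∀ x, ∃ f, IsPrimitiveNear ω x f) : LocalPrimitives X where
  IsPrimitiveAt := IsPrimitiveNear ω
  exists_isPrimitiveAt := hω
  eventually_isPrimitiveAt hf := hf.eventually_nhds
  eventually_sub_eq {_ f g} hf hg :=
    eventually_eq_of_mfderiv_eq_zero (φ := f - g) <| (hf.and hg).mono
      fun y ⟨⟨hfd, hfω⟩, hgd, hgω⟩ => ⟨hfd.sub hgd, by
        rw [mfderiv_sub hfd hgd]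
        exact ContinuousLinearMap.ext fun v => sub_eq_zero.2 ((hfω v).symm.trans (hgω v))⟩
  isPrimitiveAt_of_eventually_eq_add {_ f g} c hf hg :=
    (hf.and hg.eventually_nhds).mono
      fun y ⟨⟨hfd, hfω⟩, (hgy : g =ᶠ[𝓝 y] fun z => f z + c)⟩ => by
      have hc : HasMFDerivAt 𝓘(ℝ, E) 𝓘(ℝ) (fun _ => c) y
          (0 : TangentSpace 𝓘(ℝ, E) y →L[ℝ] ℝ) :=
        hasMFDerivAt_const c y
      refine ⟨(hfd.add mdifferentiableAt_const).congr_of_eventuallyEq hgy, fun v => ?_⟩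
      rw [hgy.mfderiv_eq, show (fun z => f z + c) = f + fun _ => c from rfl,
        (hfd.hasMFDerivAt.add hc).mfderiv]
      exact (hfω v).trans (add_zero _).symm

end Calculus

section OneForms

theorem IsClosedOneForm.exists_isPrimitiveNear
    {ω : ∀ p : M, TangentSpace 𝓘(ℝ, EuclideanSpace ℝ (Fin (n+1))) p → ℝ}
    (hω : IsClosedOneForm n ω) (hne : ∀ p, ∃ v, ω p v ≠ 0) (p : M) :
    ∃ f, IsPrimitiveNear ω p f := by
  obtain ⟨U, hU, hpU, f, hf⟩ := hω p
  refine ⟨f, mem_of_superset (hU.mem_nhds hpU) fun q hq => ⟨?_, hf q hq⟩⟩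
  obtain ⟨v, hv⟩ := hne q
  exact mdifferentiableAt_of_mfderiv_ne_zero fun h => hv (by rw [hf q hq, h]; rfl)

theorem isExactOneForm_of_isPrimitiveNear [SimplyConnectedSpace M]
    {ω : ∀ p : M, TangentSpace 𝓘(ℝ, EuclideanSpace ℝ (Fin (n+1))) p → ℝ}
    (hω : ∀ p, ∃ f, IsPrimitiveNear ω p f) : IsExactOneForm n ω := by
  have := ChartedSpace.locallyPathConnectedSpace (EuclideanSpace ℝ (Fin (n+1))) M
  obtain ⟨F, hF⟩ := (LocalPrimitives.ofOneForm ω hω).exists_forall_isPrimitiveAt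
  exact ⟨F, fun p => (hF p).self_of_nhds.1, fun p => (hF p).self_of_nhds.2⟩

theorem IsExactOneForm.exists_forall_eq_zero [CompactSpace M] [Nonempty M]
    {ω : ∀ p : M, TangentSpace 𝓘(ℝ, EuclideanSpace ℝ (Fin (n+1))) p → ℝ}
    (h : IsExactOneForm n ω) : ∃ p, ∀ v, ω p v = 0 := by
  obtain ⟨f, hfd, hf⟩ := h
  obtain ⟨p, -, hp⟩ :=
    isCompact_univ.exists_isMaxOn Set.univ_nonempty hfd.continuous.continuousOn
  refine ⟨p, fun v => ?_⟩
  rw [hf, (hp.isLocalMax univ_mem).mfderiv_eq_zero]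
  rfl

def pullbackRiggingForm (gb : LorentzMetric (EuclideanSpace ℝ (Fin (n+2))) Mb) (i : M → Mb)
    (ζ : ∀ x : Mb, TangentSpace 𝓘(ℝ, EuclideanSpace ℝ (Fin (n+2))) x) (p : M)
    (v : TangentSpace 𝓘(ℝ, EuclideanSpace ℝ (Fin (n+1))) p) : ℝ :=
  gb.g (i p) (ζ (i p)) (dI n i p v)

variable {gb : LorentzMetric (EuclideanSpace ℝ (Fin (n+2))) Mb} {i : M → Mb}
  {ζ : ∀ x : Mb, TangentSpace 𝓘(ℝ, EuclideanSpace ℝ (Fin (n+2))) x}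

lemma pullbackRiggingForm_ne_zero (hdI : ∀ p, Function.Injective (dI n i p))
    (hnull : IsNullHypersurface n gb i) (htimelike : ∀ x, gb.g x (ζ x) (ζ x) < 0) (p : M) :
    ∃ v, pullbackRiggingForm gb i ζ p v ≠ 0 := by
  obtain ⟨u, hu, hu_null⟩ := hnull p
  refine ⟨u, fun h => hu (hdI p ?_)⟩
  rw [map_zero]
  exact gb.eq_zero_of_null_of_orthogonal_timelike (htimelike (i p)) (hu_null u) h

lemma IsClosedRigging.isClosedOneForm_pullbackRiggingForm (hclosed : IsClosedRigging n gb ζ)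
    (htimelike : ∀ x, gb.g x (ζ x) (ζ x) < 0)
    (hi : MDifferentiable 𝓘(ℝ, EuclideanSpace ℝ (Fin (n+1)))
      𝓘(ℝ, EuclideanSpace ℝ (Fin (n+2))) i) :
    IsClosedOneForm n (pullbackRiggingForm gb i ζ) := by
  intro p
  obtain ⟨U, hU, hpU, f, hf⟩ := hclosed (i p)
  refine ⟨i ⁻¹' U, hU.preimage hi.continuous, hpU, f ∘ i, fun q hq v => ?_⟩
  have hfd : MDifferentiableAt 𝓘(ℝ, EuclideanSpace ℝ (Fin (n+2))) 𝓘(ℝ) f (i q) :=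
    mdifferentiableAt_of_mfderiv_ne_zero fun h =>
      (htimelike (i q)).ne (by rw [hf _ hq, h]; rfl)
  rw [mfderiv_comp q hfd (hi q), ContinuousLinearMap.comp_apply, ← hf _ hq]
  rfl

end OneForms

theorem compact_null_hypersurface_H1_nontrivial
    [CompactSpace M] [Nonempty M]
    (gb : LorentzMetric (EuclideanSpace ℝ (Fin (n+2))) Mb)
    (i : M → Mb) (hi : IsHypersurfaceIncl n i)
    (hnull : IsNullHypersurface n gb i)
    (ζ : ∀ x : Mb, TangentSpace (𝓘(ℝ, EuclideanSpace ℝ (Fin (n+2)))) x)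
    (htimelike : ∀ x : Mb, gb.g x (ζ x) (ζ x) < 0)
    (hclosed : IsClosedRigging n gb ζ) :
    (∃ ω : ∀ p : M, TangentSpace (𝓘(ℝ, EuclideanSpace ℝ (Fin (n+1)))) p → ℝ,
        IsClosedOneForm n ω ∧ ¬ IsExactOneForm n ω) ∧
      ¬ SimplyConnectedSpace M := by
  have hne := pullbackRiggingForm_ne_zero hi.2.2 hnull htimelike
  have hclosed' : IsClosedOneForm n (pullbackRiggingForm gb i ζ) :=
    hclosed.isClosedOneForm_pullbackRiggingForm htimelike (hi.1.mdifferentiable (by simp))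
  have hnot_exact : ¬ IsExactOneForm n (pullbackRiggingForm gb i ζ) := fun h => by
    obtain ⟨p, hp⟩ := h.exists_forall_eq_zero
    obtain ⟨v, hv⟩ := hne p
    exact hv (hp v)
  refine ⟨⟨_, hclosed', hnot_exact⟩, fun _ => hnot_exact ?_⟩
  exact isExactOneForm_of_isPrimitiveNear (hclosed'.exists_isPrimitiveNear hne)
end
end
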